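/- arXiv:1311.0036 — 2 statements merged into one kernel-verified Lean document; each statement's English description precedes it below -/
import Mathlib

section
/- If θ₁, θ₂ are positive reals with sin(θ₁) ≠ 0, sin(θ₂) ≠ 0, θ₁ > θ₂, and θ₁·cot(θ₁) = θ₂·cot(θ₂) > 0, then sin²(θ₁) > sin²(θ₂). -/
/-!
Write `c` for the common positive value of `θ * cot θ`. Squaring `c * sin θ = θ * cos θ` and using
`cos² = 1 - sin²` gives `sin² θ = θ² / (θ² + c²)` for both angles, and `t ↦ t / (t + c²)` is strictly
increasing on `t ≥ 0`.
-/

open Real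

lemma div_add_lt_div_add {x y k : ℝ} (hk : 0 < k) (hx : 0 < x + k) (hxy : x < y) :
    x / (x + k) < y / (y + k) := by
  rw [div_lt_div_iff₀ hx (by linarith)]
  nlinarith

lemma Real.sin_sq_eq_sq_div_sq_add_sq_mul_cot {θ : ℝ} (hs : sin θ ≠ 0) :
    sin θ ^ 2 = θ ^ 2 / (θ ^ 2 + (θ * (cos θ / sin θ)) ^ 2) := by
  have hθ : θ ≠ 0 := by rintro rfl; exact hs sin_zero
  have hden : θ ^ 2 + (θ * (cos θ / sin θ)) ^ 2 ≠ 0 := by positivity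
  have hcot : sin θ ^ 2 * (θ * (cos θ / sin θ)) ^ 2 = θ ^ 2 * cos θ ^ 2 := by field_simp
  rw [eq_div_iff hden]
  linear_combination hcot + θ ^ 2 * sin_sq_add_cos_sq θ

theorem sin_sq_gt_general (θ₁ θ₂ : ℝ) (h₂ : 0 < θ₂)
    (hs₁ : Real.sin θ₁ ≠ 0) (hs₂ : Real.sin θ₂ ≠ 0) (hgt : θ₂ < θ₁)
    (heq : θ₁ * (Real.cos θ₁ / Real.sin θ₁) = θ₂ * (Real.cos θ₂ / Real.sin θ₂))
    (hpos : 0 < θ₁ * (Real.cos θ₁ / Real.sin θ₁)) :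
    (Real.sin θ₂) ^ 2 < (Real.sin θ₁) ^ 2 := by
  rw [sin_sq_eq_sq_div_sq_add_sq_mul_cot hs₁, sin_sq_eq_sq_div_sq_add_sq_mul_cot hs₂, ← heq]
  exact div_add_lt_div_add (pow_pos hpos 2) (by positivity) (pow_lt_pow_left₀ hgt h₂.le two_ne_zero)

theorem sin_sq_gt (θ₁ θ₂ : ℝ) (h₁ : 0 < θ₁) (h₂ : 0 < θ₂)
    (hs₁ : Real.sin θ₁ ≠ 0) (hs₂ : Real.sin θ₂ ≠ 0) (hgt : θ₂ < θ₁)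
    (heq : θ₁ * (Real.cos θ₁ / Real.sin θ₁) = θ₂ * (Real.cos θ₂ / Real.sin θ₂))
    (hpos : 0 < θ₁ * (Real.cos θ₁ / Real.sin θ₁)) :
    (Real.sin θ₂) ^ 2 < (Real.sin θ₁) ^ 2 :=
  sin_sq_gt_general θ₁ θ₂ h₂ hs₁ hs₂ hgt heq hpos
end

section
/- Under the hypotheses of the previous statement, ∂_ξ f(t₀, ξ₀) = −(1/2)(k₂² − k₁²)·(1 + (t₀/(θ₁²θ₂²))·(a² − a)) < 0, and consequently the implicit curve f = 0 satisfies dt/dξ = (θ₁²θ₂² + t(a² − a))/(ξ(a² − a)) > t/ξ. -/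
/-!
With `g(u) = √u cot √u`, so that `g(θ²) = θ cot θ`, differentiating `θ cot θ` in `θ` gives
`g'(u) = -1/2 - (g(u)² - g(u)) / (2u)`. At the point where both `g(θⱼ²)` equal `a`, the chain
rule through `θⱼ² = t - ξ kⱼ²` makes `∂_ξ f` an explicit rational expression in `a`, `t` and the
`θⱼ²`; it simplifies because `k₁² θ₂² - k₂² θ₁² = -t (k₂² - k₁²)`. Since `a > 1`, `a² - a > 0`,
which gives the sign of `∂_ξ f` and the comparison of the slope with `t / ξ`.
-/

open Real

noncomputable def sqrtCot (u : ℝ) : ℝ := √u * (cos √u / sin √u)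

theorem hasDerivAt_sqrtCot {u : ℝ} (hu : 0 < u) (hs : sin √u ≠ 0) :
    HasDerivAt sqrtCot (-(1 / 2) - (sqrtCot u ^ 2 - sqrtCot u) / (2 * u)) u := by
  have hθ : √u ≠ 0 := (sqrt_pos.2 hu).ne'
  have hsqrt : HasDerivAt sqrt (1 / (2 * √u)) u := hasDerivAt_sqrt hu.ne'
  have hcot := ((hasDerivAt_cos √u).comp u hsqrt).div ((hasDerivAt_sin √u).comp u hsqrt) hs
  refine (hsqrt.mul hcot).congr_deriv ?_
  have hsq : √u ^ 2 = u := sq_sqrt hu.le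
  simp only [sqrtCot, Pi.div_apply, Function.comp_apply]
  field_simp
  linear_combination (√u * cos √u ^ 2 - cos √u * sin √u) * hsq

theorem hasDerivAt_sqrtCot_sub_sqrtCot {t c₁ c₂ ξ a : ℝ}
    (hu₁ : 0 < t - ξ * c₁) (hu₂ : 0 < t - ξ * c₂)
    (hs₁ : sin √(t - ξ * c₁) ≠ 0) (hs₂ : sin √(t - ξ * c₂) ≠ 0)
    (ha₁ : sqrtCot (t - ξ * c₁) = a) (ha₂ : sqrtCot (t - ξ * c₂) = a) :
    HasDerivAt (fun ξ => sqrtCot (t - ξ * c₁) - sqrtCot (t - ξ * c₂))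
      (-(1 / 2) * (c₂ - c₁) * (1 + t / ((t - ξ * c₁) * (t - ξ * c₂)) * (a ^ 2 - a))) ξ := by
  have hchain : ∀ c, 0 < t - ξ * c → sin √(t - ξ * c) ≠ 0 →
      HasDerivAt (fun ξ => sqrtCot (t - ξ * c))
        ((-(1 / 2) - (sqrtCot (t - ξ * c) ^ 2 - sqrtCot (t - ξ * c)) / (2 * (t - ξ * c))) * -c) ξ :=
    fun c hu hs => (hasDerivAt_sqrtCot hu hs).comp (h := fun ξ => t - ξ * c) ξ
      (by simpa using ((hasDerivAt_id ξ).mul_const c).const_sub t)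
  refine ((hchain c₁ hu₁ hs₁).sub (hchain c₂ hu₂ hs₂)).congr_deriv ?_
  rw [ha₁, ha₂]
  field_simp
  ring

/-- The denominator is `∂_t f = ξ (c₂ - c₁) (a² - a) / (2 u₁ u₂)` (by `hasDerivAt_sqrtCot`, as
for `∂_ξ f`), so the left side is the implicit slope `-∂_ξ f / ∂_t f`. -/
theorem implicit_slope_eq {t ξ u₁ u₂ c₁ c₂ b : ℝ} (hξ : ξ ≠ 0) (hu₁ : u₁ ≠ 0) (hu₂ : u₂ ≠ 0)
    (hc : c₂ - c₁ ≠ 0) (hb : b ≠ 0) :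
    -(-(1 / 2) * (c₂ - c₁) * (1 + t / (u₁ * u₂) * b)) / (ξ / (2 * u₁ * u₂) * (c₂ - c₁) * b) =
      (u₁ * u₂ + t * b) / (ξ * b) := by
  field_simp

theorem div_lt_add_mul_div_mul {p t ξ b : ℝ} (hp : 0 < p) (hξ : 0 < ξ) (hb : 0 < b) :
    t / ξ < (p + t * b) / (ξ * b) := by
  rw [add_div, mul_div_mul_right t ξ hb.ne']
  exact lt_add_of_pos_left _ (by positivity)

theorem partial_xi_f_and_implicit_slope_general (k₁ k₂ : ℕ) (hk : k₁ < k₂)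
    (t₀ ξ₀ : ℝ) (ht₀ : 0 < t₀) (hξ₀ : 0 < ξ₀)
    (h₂ : t₀ - ξ₀ * (k₂ : ℝ) ^ 2 > Real.pi ^ 2)
    (h₁₂ : t₀ - ξ₀ * (k₁ : ℝ) ^ 2 > t₀ - ξ₀ * (k₂ : ℝ) ^ 2)
    (hs₁ : Real.sin (Real.sqrt (t₀ - ξ₀ * (k₁ : ℝ) ^ 2)) ≠ 0)
    (hs₂ : Real.sin (Real.sqrt (t₀ - ξ₀ * (k₂ : ℝ) ^ 2)) ≠ 0)
    (a : ℝ)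
    (ha : a = Real.sqrt (t₀ - ξ₀ * (k₁ : ℝ) ^ 2) *
        (Real.cos (Real.sqrt (t₀ - ξ₀ * (k₁ : ℝ) ^ 2)) /
          Real.sin (Real.sqrt (t₀ - ξ₀ * (k₁ : ℝ) ^ 2))))
    (hf : Real.sqrt (t₀ - ξ₀ * (k₁ : ℝ) ^ 2) *
        (Real.cos (Real.sqrt (t₀ - ξ₀ * (k₁ : ℝ) ^ 2)) /
          Real.sin (Real.sqrt (t₀ - ξ₀ * (k₁ : ℝ) ^ 2))) =
      Real.sqrt (t₀ - ξ₀ * (k₂ : ℝ) ^ 2) *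
        (Real.cos (Real.sqrt (t₀ - ξ₀ * (k₂ : ℝ) ^ 2)) /
          Real.sin (Real.sqrt (t₀ - ξ₀ * (k₂ : ℝ) ^ 2))))
    (ha1 : 1 < a) :
    HasDerivAt (fun ξ : ℝ =>
        Real.sqrt (t₀ - ξ * (k₁ : ℝ) ^ 2) *
          (Real.cos (Real.sqrt (t₀ - ξ * (k₁ : ℝ) ^ 2)) /
            Real.sin (Real.sqrt (t₀ - ξ * (k₁ : ℝ) ^ 2))) -
        Real.sqrt (t₀ - ξ * (k₂ : ℝ) ^ 2) *
          (Real.cos (Real.sqrt (t₀ - ξ * (k₂ : ℝ) ^ 2)) /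
            Real.sin (Real.sqrt (t₀ - ξ * (k₂ : ℝ) ^ 2))))
      (-(1 / 2) * ((k₂ : ℝ) ^ 2 - (k₁ : ℝ) ^ 2) *
        (1 + t₀ / ((t₀ - ξ₀ * (k₁ : ℝ) ^ 2) * (t₀ - ξ₀ * (k₂ : ℝ) ^ 2)) * (a ^ 2 - a))) ξ₀ ∧
    -(1 / 2) * ((k₂ : ℝ) ^ 2 - (k₁ : ℝ) ^ 2) *
        (1 + t₀ / ((t₀ - ξ₀ * (k₁ : ℝ) ^ 2) * (t₀ - ξ₀ * (k₂ : ℝ) ^ 2)) * (a ^ 2 - a)) < 0 ∧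
    -(-(1 / 2) * ((k₂ : ℝ) ^ 2 - (k₁ : ℝ) ^ 2) *
          (1 + t₀ / ((t₀ - ξ₀ * (k₁ : ℝ) ^ 2) * (t₀ - ξ₀ * (k₂ : ℝ) ^ 2)) * (a ^ 2 - a))) /
        (ξ₀ / (2 * (t₀ - ξ₀ * (k₁ : ℝ) ^ 2) * (t₀ - ξ₀ * (k₂ : ℝ) ^ 2)) *
          ((k₂ : ℝ) ^ 2 - (k₁ : ℝ) ^ 2) * (a ^ 2 - a)) =
      ((t₀ - ξ₀ * (k₁ : ℝ) ^ 2) * (t₀ - ξ₀ * (k₂ : ℝ) ^ 2) + t₀ * (a ^ 2 - a)) /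
        (ξ₀ * (a ^ 2 - a)) ∧
    ((t₀ - ξ₀ * (k₁ : ℝ) ^ 2) * (t₀ - ξ₀ * (k₂ : ℝ) ^ 2) + t₀ * (a ^ 2 - a)) /
        (ξ₀ * (a ^ 2 - a)) > t₀ / ξ₀ := by
  have hu₂ : 0 < t₀ - ξ₀ * (k₂ : ℝ) ^ 2 := (pow_pos pi_pos 2).trans h₂
  have hu₁ : 0 < t₀ - ξ₀ * (k₁ : ℝ) ^ 2 := hu₂.trans h₁₂
  have hk_sq : 0 < (k₂ : ℝ) ^ 2 - (k₁ : ℝ) ^ 2 :=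
    sub_pos.2 (pow_lt_pow_left₀ (by exact_mod_cast hk) (Nat.cast_nonneg _) two_ne_zero)
  have hb : 0 < a ^ 2 - a := by nlinarith
  refine ⟨hasDerivAt_sqrtCot_sub_sqrtCot hu₁ hu₂ hs₁ hs₂ ha.symm (hf ▸ ha).symm, ?_,
    implicit_slope_eq hξ₀.ne' hu₁.ne' hu₂.ne' hk_sq.ne' hb.ne',
    div_lt_add_mul_div_mul (mul_pos hu₁ hu₂) hξ₀ hb⟩
  exact mul_neg_of_neg_of_pos (by linarith) (by positivity)

theorem partial_xi_f_and_implicit_slope (k₁ k₂ : ℕ) (hk₁ : 0 < k₁) (hk : k₁ < k₂)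
    (t₀ ξ₀ : ℝ) (ht₀ : 0 < t₀) (hξ₀ : 0 < ξ₀)
    (h₂ : t₀ - ξ₀ * (k₂ : ℝ) ^ 2 > Real.pi ^ 2)
    (h₁₂ : t₀ - ξ₀ * (k₁ : ℝ) ^ 2 > t₀ - ξ₀ * (k₂ : ℝ) ^ 2)
    (hs₁ : Real.sin (Real.sqrt (t₀ - ξ₀ * (k₁ : ℝ) ^ 2)) ≠ 0)
    (hs₂ : Real.sin (Real.sqrt (t₀ - ξ₀ * (k₂ : ℝ) ^ 2)) ≠ 0)
    (a : ℝ)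
    (ha : a = Real.sqrt (t₀ - ξ₀ * (k₁ : ℝ) ^ 2) *
        (Real.cos (Real.sqrt (t₀ - ξ₀ * (k₁ : ℝ) ^ 2)) /
          Real.sin (Real.sqrt (t₀ - ξ₀ * (k₁ : ℝ) ^ 2))))
    (hf : Real.sqrt (t₀ - ξ₀ * (k₁ : ℝ) ^ 2) *
        (Real.cos (Real.sqrt (t₀ - ξ₀ * (k₁ : ℝ) ^ 2)) /
          Real.sin (Real.sqrt (t₀ - ξ₀ * (k₁ : ℝ) ^ 2))) =
      Real.sqrt (t₀ - ξ₀ * (k₂ : ℝ) ^ 2) *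
        (Real.cos (Real.sqrt (t₀ - ξ₀ * (k₂ : ℝ) ^ 2)) /
          Real.sin (Real.sqrt (t₀ - ξ₀ * (k₂ : ℝ) ^ 2))))
    (ha1 : 1 < a) :
    HasDerivAt (fun ξ : ℝ =>
        Real.sqrt (t₀ - ξ * (k₁ : ℝ) ^ 2) *
          (Real.cos (Real.sqrt (t₀ - ξ * (k₁ : ℝ) ^ 2)) /
            Real.sin (Real.sqrt (t₀ - ξ * (k₁ : ℝ) ^ 2))) -
        Real.sqrt (t₀ - ξ * (k₂ : ℝ) ^ 2) *
          (Real.cos (Real.sqrt (t₀ - ξ * (k₂ : ℝ) ^ 2)) /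
            Real.sin (Real.sqrt (t₀ - ξ * (k₂ : ℝ) ^ 2))))
      (-(1 / 2) * ((k₂ : ℝ) ^ 2 - (k₁ : ℝ) ^ 2) *
        (1 + t₀ / ((t₀ - ξ₀ * (k₁ : ℝ) ^ 2) * (t₀ - ξ₀ * (k₂ : ℝ) ^ 2)) * (a ^ 2 - a))) ξ₀ ∧
    -(1 / 2) * ((k₂ : ℝ) ^ 2 - (k₁ : ℝ) ^ 2) *
        (1 + t₀ / ((t₀ - ξ₀ * (k₁ : ℝ) ^ 2) * (t₀ - ξ₀ * (k₂ : ℝ) ^ 2)) * (a ^ 2 - a)) < 0 ∧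
    -(-(1 / 2) * ((k₂ : ℝ) ^ 2 - (k₁ : ℝ) ^ 2) *
          (1 + t₀ / ((t₀ - ξ₀ * (k₁ : ℝ) ^ 2) * (t₀ - ξ₀ * (k₂ : ℝ) ^ 2)) * (a ^ 2 - a))) /
        (ξ₀ / (2 * (t₀ - ξ₀ * (k₁ : ℝ) ^ 2) * (t₀ - ξ₀ * (k₂ : ℝ) ^ 2)) *
          ((k₂ : ℝ) ^ 2 - (k₁ : ℝ) ^ 2) * (a ^ 2 - a)) =
      ((t₀ - ξ₀ * (k₁ : ℝ) ^ 2) * (t₀ - ξ₀ * (k₂ : ℝ) ^ 2) + t₀ * (a ^ 2 - a)) /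
        (ξ₀ * (a ^ 2 - a)) ∧
    ((t₀ - ξ₀ * (k₁ : ℝ) ^ 2) * (t₀ - ξ₀ * (k₂ : ℝ) ^ 2) + t₀ * (a ^ 2 - a)) /
        (ξ₀ * (a ^ 2 - a)) > t₀ / ξ₀ :=
  partial_xi_f_and_implicit_slope_general k₁ k₂ hk t₀ ξ₀ ht₀ hξ₀ h₂ h₁₂ hs₁ hs₂ a ha hf ha1
end
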